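/- Let Z be a measurable space with probability measure μ, let n ≥ 1, let H be a nonempty countable set of measurable functions h : Z → ℝ with 0 ≤ h(z) ≤ B for all h ∈ H and z ∈ Z, where B > 0, and let 0 < δ < 1. Define R̂(z₁, …, zₙ) = E_σ[ sup_{h ∈ H} (1/n) Σ_{i=1}^n σ_i h(z_i) ] with σ uniform on {−1,1}ⁿ. Then, with probability at least 1 − δ over a sample (z₁, …, zₙ) drawn i.i.d. from μ, one has R̂(z₁, …, zₙ) ≤ E_{S∼μⁿ}[R̂(S)] + B·√(log(2/δ)/(2n)). -/

import Mathlib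

open MeasureTheory

/-- The empirical Rademacher complexity of a class `H` of real-valued functions on a
sample `z : Fin n → Z`:
`R̂(z) = E_σ[ sup_{h ∈ H} (1/n) Σ_i σ_i h(z_i) ]`, with `σ` uniform on `{−1,1}ⁿ`. -/
noncomputable def empRademacher {Z : Type*} (H : Set (Z → ℝ)) (n : ℕ)
    (z : Fin n → Z) : ℝ :=
  (∑ σ : Fin n → Bool,
      sSup ((fun h : Z → ℝ =>
        (1 / (n : ℝ)) * ∑ i, (if σ i then (1 : ℝ) else -1) * h (z i)) '' H)) / 2 ^ n

/-!
Changing one sample point moves each correlation `(1/n) Σ σᵢ h(zᵢ)` by at most `B/n`, and taking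
the supremum over `H` and averaging over `σ` preserves this, so `R̂` has bounded differences `B/n`.
McDiarmid's inequality then bounds the upper tail: integrating out one coordinate at a time,
Hoeffding's lemma on each slice shows that `R̂ - E R̂` is sub-Gaussian with variance proxy
`n (B/(2n))²`, and the Chernoff bound at `B √(log(2/δ)/(2n))` gives a tail of `δ/2`.
-/

open ProbabilityTheory Real

section BoundedFunctions

variable {Ω : Type*} [MeasurableSpace Ω] {ν : Measure Ω} {f : Ω → ℝ} {M : ℝ}

lemma integrable_of_abs_le [IsFiniteMeasure ν] (hf : Measurable f) (hM : ∀ x, |f x| ≤ M) :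
    Integrable f ν :=
  Integrable.of_mem_Icc (-M) M hf.aemeasurable (ae_of_all _ fun x => abs_le.1 (hM x))

lemma integrable_exp_mul_of_abs_le [IsFiniteMeasure ν] (hf : Measurable f)
    (hM : ∀ x, |f x| ≤ M) (t : ℝ) : Integrable (fun x => exp (t * f x)) ν :=
  integrable_exp_mul_of_mem_Icc hf.aemeasurable (ae_of_all _ fun x => abs_le.1 (hM x))

lemma abs_integral_le_of_abs_le [IsProbabilityMeasure ν] (hM : ∀ x, |f x| ≤ M) :
    |∫ x, f x ∂ν| ≤ M := by
  simpa using norm_integral_le_of_norm_le_const (μ := ν) (f := f) (ae_of_all _ hM)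

lemma integral_exp_mul_le_of_sub_le [IsProbabilityMeasure ν] (hf : Measurable f) {c : ℝ}
    (hc : ∀ x y, f x - f y ≤ c) (t : ℝ) :
    ∫ x, exp (t * f x) ∂ν ≤ exp (t * ∫ x, f x ∂ν + (c / 2) ^ 2 * t ^ 2 / 2) := by
  obtain ⟨x₀⟩ := nonempty_of_isProbabilityMeasure ν
  have : Nonempty Ω := ⟨x₀⟩
  have hc0 : 0 ≤ c := by simpa using hc x₀ x₀
  have hbdd : BddBelow (Set.range f) :=
    ⟨f x₀ - c, by rintro _ ⟨x, rfl⟩; linarith [hc x₀ x]⟩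
  -- `f` ranges in an interval of length `c`, which is all Hoeffding's lemma needs
  have hmem : ∀ x, f x ∈ Set.Icc (⨅ y, f y) ((⨅ y, f y) + c) := fun x =>
    ⟨ciInf_le hbdd x, by linarith [le_ciInf fun y => (by linarith [hc x y] : f x - c ≤ f y)]⟩
  have hoeffding := (hasSubgaussianMGF_of_mem_Icc hf.aemeasurable (ae_of_all ν hmem)).mgf_le t
  have hparam : (((‖(⨅ y, f y) + c - ⨅ y, f y‖₊ / 2) ^ 2 : NNReal) : ℝ) = (c / 2) ^ 2 := by
    simp [abs_of_nonneg hc0]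
  rw [hparam] at hoeffding
  calc ∫ x, exp (t * f x) ∂ν
      = exp (t * ∫ x, f x ∂ν) * mgf (fun x => f x - ∫ x, f x ∂ν) ν t := by
        rw [mgf, ← integral_const_mul]
        congr 1 with x
        rw [← exp_add]; ring_nf
    _ ≤ exp (t * ∫ x, f x ∂ν) * exp ((c / 2) ^ 2 * t ^ 2 / 2) := by gcongr
    _ = exp (t * ∫ x, f x ∂ν + (c / 2) ^ 2 * t ^ 2 / 2) := (exp_add _ _).symm

end BoundedFunctions

section PiFinSucc

variable {Z : Type*} [MeasurableSpace Z] {n : ℕ} (μ : Fin (n + 1) → Measure Z)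
  [∀ i, SigmaFinite (μ i)]

lemma measurePreserving_fin_cons :
    MeasurePreserving (fun p : Z × (Fin n → Z) => (Fin.cons p.1 p.2 : Fin (n + 1) → Z))
      ((μ 0).prod (Measure.pi fun j => μ j.succ)) (Measure.pi μ) := by
  convert (measurePreserving_piFinSuccAbove μ 0).symm using 1
  · ext p : 1
    simp [Fin.insertNthEquiv, Fin.insertNth_zero']
  · simp

lemma measurableEmbedding_fin_cons :
    MeasurableEmbedding (fun p : Z × (Fin n → Z) => (Fin.cons p.1 p.2 : Fin (n + 1) → Z)) := by
  convert (MeasurableEquiv.piFinSuccAbove (fun _ => Z) 0).symm.measurableEmbedding using 1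
  ext p : 1
  simp [Fin.insertNthEquiv, Fin.insertNth_zero']

lemma integral_pi_fin_succ (φ : (Fin (n + 1) → Z) → ℝ) :
    ∫ x, φ x ∂Measure.pi μ = ∫ p, φ (Fin.cons p.1 p.2) ∂(μ 0).prod (Measure.pi fun j => μ j.succ) :=
  ((measurePreserving_fin_cons μ).integral_comp measurableEmbedding_fin_cons φ).symm

lemma integral_pi_fin_succ_eq_integral_integral {φ : (Fin (n + 1) → Z) → ℝ}
    (hφ : Integrable φ (Measure.pi μ)) :
    ∫ x, φ x ∂Measure.pi μ =
      ∫ y, ∫ v, φ (Fin.cons v y) ∂μ 0 ∂Measure.pi fun j => μ j.succ := by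
  rw [integral_pi_fin_succ, integral_prod_symm]
  exact ((measurePreserving_fin_cons μ).integrable_comp_emb measurableEmbedding_fin_cons).2 hφ

end PiFinSucc

-- One-sided, but equivalent to the usual `|f (update x i v) - f x| ≤ c`: swap the two points.
def HasBoundedDifferences {ι Z : Type*} [DecidableEq ι] (f : (ι → Z) → ℝ) (c : ℝ) : Prop :=
  ∀ x i v, f (Function.update x i v) - f x ≤ c

namespace HasBoundedDifferences

variable {Z : Type*} {c : ℝ}

section Cons

variable {n : ℕ} {f : (Fin (n + 1) → Z) → ℝ}

lemma sub_le_of_cons (hf : HasBoundedDifferences f c) (y : Fin n → Z) (v w : Z) :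
    f (Fin.cons v y) - f (Fin.cons w y) ≤ c := by
  simpa [Fin.update_cons_zero] using hf (Fin.cons w y) 0 v

lemma integral_cons [MeasurableSpace Z] {ν : Measure Z} [IsProbabilityMeasure ν]
    (hf : HasBoundedDifferences f c) (hint : ∀ y, Integrable (fun v => f (Fin.cons v y)) ν) :
    HasBoundedDifferences (fun y => ∫ v, f (Fin.cons v y) ∂ν) c := by
  intro y j w
  rw [← integral_sub (hint _) (hint y)]
  refine (integral_mono ((hint _).sub (hint y)) (integrable_const c) fun v => ?_).trans (by simp)
  simpa [Fin.cons_update] using hf (Fin.cons v y) j.succ w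

end Cons

variable [MeasurableSpace Z] {n : ℕ} (μ : Fin n → Measure Z) [∀ i, IsProbabilityMeasure (μ i)]
  {f : (Fin n → Z) → ℝ} {M : ℝ}

theorem integral_exp_mul_le (hc : HasBoundedDifferences f c) (t : ℝ) (hf : Measurable f)
    (hM : ∀ x, |f x| ≤ M) :
    ∫ x, exp (t * f x) ∂Measure.pi μ ≤
      exp (t * ∫ x, f x ∂Measure.pi μ + n * ((c / 2) ^ 2 * t ^ 2 / 2)) := by
  induction n with
  | zero => simp [integral_unique]
  | succ n ih =>
    set g : (Fin n → Z) → ℝ := fun y => ∫ v, f (Fin.cons v y) ∂μ 0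
    have hcons : Measurable fun p : Z × (Fin n → Z) => f (Fin.cons p.1 p.2) :=
      hf.comp (measurePreserving_fin_cons μ).measurable
    have hslice (y : Fin n → Z) : Measurable fun v => f (Fin.cons v y) :=
      hcons.comp (measurable_id.prodMk measurable_const)
    have hg : Measurable g := hcons.stronglyMeasurable.integral_prod_left'.measurable
    have hgM (y : Fin n → Z) : |g y| ≤ M := abs_integral_le_of_abs_le fun v => hM _
    have hgc : HasBoundedDifferences g c :=
      hc.integral_cons fun y => integrable_of_abs_le (hslice y) fun v => hM _
    have hslice_mgf (y : Fin n → Z) :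
        ∫ v, exp (t * f (Fin.cons v y)) ∂μ 0 ≤ exp (t * g y + (c / 2) ^ 2 * t ^ 2 / 2) :=
      integral_exp_mul_le_of_sub_le (hslice y) (hc.sub_le_of_cons y) t
    rw [integral_pi_fin_succ_eq_integral_integral μ (integrable_exp_mul_of_abs_le hf hM t),
      integral_pi_fin_succ_eq_integral_integral μ (integrable_of_abs_le hf hM)]
    set ν : Measure (Fin n → Z) := Measure.pi fun j => μ j.succ
    calc ∫ y, ∫ v, exp (t * f (Fin.cons v y)) ∂μ 0 ∂ν
        ≤ ∫ y, exp (t * g y + (c / 2) ^ 2 * t ^ 2 / 2) ∂ν :=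
          integral_mono_of_nonneg (ae_of_all _ fun y => integral_nonneg fun v => (exp_pos _).le)
            (integrable_exp_mul_of_abs_le hg hgM t |>.mul_const _ |>.congr
              (ae_of_all _ fun y => (exp_add _ _).symm)) (ae_of_all _ hslice_mgf)
      _ = exp ((c / 2) ^ 2 * t ^ 2 / 2) * ∫ y, exp (t * g y) ∂ν := by
          simp_rw [exp_add, integral_mul_const, mul_comm]
      _ ≤ exp ((c / 2) ^ 2 * t ^ 2 / 2) * exp (t * ∫ y, g y ∂ν + n * ((c / 2) ^ 2 * t ^ 2 / 2)) := by
          gcongr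
          exact ih _ hgc hg hgM
      _ = exp (t * ∫ y, g y ∂ν + ↑(n + 1) * ((c / 2) ^ 2 * t ^ 2 / 2)) := by
          rw [← exp_add]; push_cast; ring_nf

theorem hasSubgaussianMGF (hc : HasBoundedDifferences f c) (hf : Measurable f)
    (hM : ∀ x, |f x| ≤ M) :
    HasSubgaussianMGF (fun x => f x - ∫ y, f y ∂Measure.pi μ) (n * (‖c‖₊ / 2) ^ 2)
      (Measure.pi μ) where
  integrable_exp_mul t := integrable_exp_mul_of_abs_le (hf.sub_const _)
    (fun x => (abs_sub _ _).trans (add_le_add (hM x) (abs_integral_le_of_abs_le hM))) t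
  mgf_le t := by
    set E := ∫ y, f y ∂Measure.pi μ
    calc mgf (fun x => f x - E) (Measure.pi μ) t
        = exp (-(t * E)) * ∫ x, exp (t * f x) ∂Measure.pi μ := by
          rw [mgf, ← integral_const_mul]
          congr 1 with x
          rw [← exp_add]; ring_nf
      _ ≤ exp (-(t * E)) * exp (t * E + n * ((c / 2) ^ 2 * t ^ 2 / 2)) := by
          gcongr
          exact hc.integral_exp_mul_le μ t hf hM
      _ = exp (↑(n * (‖c‖₊ / 2) ^ 2 : NNReal) * t ^ 2 / 2) := by
          rw [← exp_add]
          push_cast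
          simp only [Real.norm_eq_abs, div_pow, sq_abs]
          ring_nf

theorem measureReal_ge_le (hc : HasBoundedDifferences f c) (hf : Measurable f)
    (hM : ∀ x, |f x| ≤ M) {ε : ℝ} (hε : 0 ≤ ε) :
    (Measure.pi μ).real {x | ∫ y, f y ∂Measure.pi μ + ε ≤ f x} ≤
      exp (-2 * ε ^ 2 / (n * c ^ 2)) := by
  convert (hc.hasSubgaussianMGF μ hf hM).measure_ge_le hε using 2
  · ext x
    simp only [Set.mem_ofPred_eq]
    constructor <;> intro h <;> linarith
  · push_cast
    simp only [Real.norm_eq_abs, div_pow, sq_abs]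
    ring

end HasBoundedDifferences

lemma ofReal_one_sub_le_measure_le {Ω : Type*} [MeasurableSpace Ω] {ν : Measure Ω}
    [IsProbabilityMeasure ν] {g : Ω → ℝ} {a δ : ℝ} (h : ν.real {x | a ≤ g x} ≤ δ) :
    ENNReal.ofReal (1 - δ) ≤ ν {x | g x ≤ a} := by
  have hcover : (1 : ENNReal) ≤ ν {x | g x ≤ a} + ν {x | a ≤ g x} := by
    calc (1 : ENNReal) = ν ({x | g x ≤ a} ∪ {x | a ≤ g x}) := by
          rw [← measure_univ (μ := ν)]
          congr 1
          ext x
          simp [le_total]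
      _ ≤ ν {x | g x ≤ a} + ν {x | a ≤ g x} := measure_union_le _ _
  have htail : ν {x | a ≤ g x} ≤ ENNReal.ofReal δ :=
    (ENNReal.le_ofReal_iff_toReal_le (measure_ne_top ν _) (measureReal_nonneg.trans h)).2 h
  calc ENNReal.ofReal (1 - δ) = 1 - ENNReal.ofReal δ := by
        rw [ENNReal.ofReal_sub _ (measureReal_nonneg.trans h), ENNReal.ofReal_one]
    _ ≤ ν {x | g x ≤ a} := tsub_le_iff_right.2 (hcover.trans (by gcongr))

section SupOverClass

variable {α : Type*} {H : Set α} {B : ℝ}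

lemma abs_csSup_image_le {F : α → ℝ} (hH : H.Nonempty) (hF : ∀ h ∈ H, |F h| ≤ B) :
    |sSup (F '' H)| ≤ B := by
  obtain ⟨h₀, hh₀⟩ := hH
  have hbdd : BddAbove (F '' H) := ⟨B, by rintro _ ⟨h, hh, rfl⟩; exact (abs_le.1 (hF h hh)).2⟩
  refine abs_le.2 ⟨?_, csSup_le ⟨_, h₀, hh₀, rfl⟩ ?_⟩
  · exact (abs_le.1 (hF h₀ hh₀)).1.trans (le_csSup hbdd ⟨h₀, hh₀, rfl⟩)
  · rintro _ ⟨h, hh, rfl⟩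
    exact (abs_le.1 (hF h hh)).2

lemma csSup_image_sub_csSup_image_le {F G : α → ℝ} {c : ℝ} (hH : H.Nonempty)
    (hG : BddAbove (G '' H)) (hFG : ∀ h ∈ H, F h - G h ≤ c) :
    sSup (F '' H) - sSup (G '' H) ≤ c := by
  rw [sub_le_iff_le_add]
  refine csSup_le (hH.image F) ?_
  rintro _ ⟨h, hh, rfl⟩
  linarith [hFG h hh, le_csSup hG ⟨h, hh, rfl⟩]

lemma measurable_csSup_image {Ω : Type*} [MeasurableSpace Ω] (hH : H.Countable)
    {F : α → Ω → ℝ} (hF : ∀ h ∈ H, Measurable (F h)) :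
    Measurable fun ω => sSup ((F · ω) '' H) := by
  have := hH.to_subtype
  simp_rw [sSup_image']
  exact Measurable.iSup fun h : H => hF h h.2

end SupOverClass

lemma sum_div_two_pow_le {n : ℕ} {a : (Fin n → Bool) → ℝ} {b : ℝ} (h : ∀ σ, a σ ≤ b) :
    (∑ σ, a σ) / 2 ^ n ≤ b := by
  rw [div_le_iff₀ (by positivity)]
  simpa [mul_comm] using Finset.sum_le_card_nsmul Finset.univ a b fun σ _ => h σ

section Rademacher

variable {Z : Type*} {n : ℕ} {B : ℝ}

noncomputable def rademacherCorrelation (σ : Fin n → Bool) (h : Z → ℝ) (z : Fin n → Z) : ℝ :=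
  (1 / (n : ℝ)) * ∑ i, (if σ i then (1 : ℝ) else -1) * h (z i)

lemma empRademacher_eq (H : Set (Z → ℝ)) (z : Fin n → Z) :
    empRademacher H n z =
      (∑ σ : Fin n → Bool, sSup ((rademacherCorrelation σ · z) '' H)) / 2 ^ n :=
  rfl

lemma abs_rademacherCorrelation_le (hB : 0 ≤ B) {h : Z → ℝ} (hh : ∀ z, |h z| ≤ B)
    (σ : Fin n → Bool) (z : Fin n → Z) : |rademacherCorrelation σ h z| ≤ B := by
  have hsum : |∑ i, (if σ i then (1 : ℝ) else -1) * h (z i)| ≤ n * B := by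
    refine (Finset.abs_sum_le_sum_abs _ _).trans ?_
    simpa using Finset.sum_le_card_nsmul Finset.univ
      (fun i => |(if σ i then (1 : ℝ) else -1) * h (z i)|) B fun i _ => by
        split_ifs <;> simpa using hh (z i)
  rcases n.eq_zero_or_pos with rfl | hn
  · simpa [rademacherCorrelation] using hB
  rw [rademacherCorrelation, abs_mul, abs_of_pos (by positivity)]
  calc 1 / (n : ℝ) * |∑ i, (if σ i then (1 : ℝ) else -1) * h (z i)| ≤ 1 / n * (n * B) := by
        gcongr
    _ = B := by field_simp

lemma rademacherCorrelation_update_sub_le {h : Z → ℝ} (hh : ∀ v w, h v - h w ≤ B)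
    (σ : Fin n → Bool) (z : Fin n → Z) (i : Fin n) (v : Z) :
    rademacherCorrelation σ h (Function.update z i v) - rademacherCorrelation σ h z ≤ B / n := by
  have hdiff : rademacherCorrelation σ h (Function.update z i v) - rademacherCorrelation σ h z =
      1 / n * ((if σ i then (1 : ℝ) else -1) * (h v - h (z i))) := by
    rw [rademacherCorrelation, rademacherCorrelation, ← mul_sub, ← Finset.sum_sub_distrib,
      Finset.sum_eq_single i]
    · simp [mul_sub]
    · intro j _ hj
      simp [Function.update_of_ne hj]
    · simp
  rw [hdiff, one_div, div_eq_inv_mul]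
  gcongr
  split_ifs
  · simpa using hh v (z i)
  · simpa using hh (z i) v

variable {H : Set (Z → ℝ)}

lemma measurable_empRademacher [MeasurableSpace Z] (hHc : H.Countable)
    (hmeas : ∀ h ∈ H, Measurable h) : Measurable (empRademacher H n) := by
  have hcorr (σ : Fin n → Bool) (h : Z → ℝ) (hh : Measurable h) :
      Measurable (rademacherCorrelation σ h) := by
    unfold rademacherCorrelation
    fun_prop
  simp_rw [funext (empRademacher_eq H)]
  refine (Finset.measurable_sum _ fun σ _ => ?_).div_const _
  exact measurable_csSup_image hHc fun h hh => hcorr σ h (hmeas h hh)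

lemma abs_empRademacher_le (hH : H.Nonempty) (hB : 0 ≤ B) (hbd : ∀ h ∈ H, ∀ z, |h z| ≤ B)
    (z : Fin n → Z) : |empRademacher H n z| ≤ B := by
  have hT (σ : Fin n → Bool) : |sSup ((rademacherCorrelation σ · z) '' H)| ≤ B :=
    abs_csSup_image_le hH fun h hh => abs_rademacherCorrelation_le hB (hbd h hh) σ z
  rw [empRademacher_eq, abs_le]
  constructor
  · have := sum_div_two_pow_le fun σ => neg_le.1 (abs_le.1 (hT σ)).1
    rw [Finset.sum_neg_distrib, neg_div] at this
    linarith
  · exact sum_div_two_pow_le fun σ => (abs_le.1 (hT σ)).2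

lemma hasBoundedDifferences_empRademacher (hH : H.Nonempty) (hB : 0 ≤ B)
    (hbd : ∀ h ∈ H, ∀ z, h z ∈ Set.Icc 0 B) :
    HasBoundedDifferences (empRademacher H n) (B / n) := by
  intro z i v
  have habs (h : Z → ℝ) (hh : h ∈ H) (z : Z) : |h z| ≤ B :=
    (abs_of_nonneg (hbd h hh z).1).trans_le (hbd h hh z).2
  rw [empRademacher_eq, empRademacher_eq, ← sub_div, ← Finset.sum_sub_distrib]
  refine sum_div_two_pow_le fun σ => csSup_image_sub_csSup_image_le hH ?_ fun h hh => ?_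
  · refine ⟨B, ?_⟩
    rintro _ ⟨h, hh, rfl⟩
    exact (abs_le.1 (abs_rademacherCorrelation_le hB (habs h hh) σ z)).2
  · exact rademacherCorrelation_update_sub_le
      (fun v w => by linarith [(hbd h hh v).2, (hbd h hh w).1]) σ z i v

end Rademacher

/-- With probability at least `1 − δ` over an i.i.d. sample of size `n`
from `μ`, the empirical Rademacher complexity of a countable class `H` with values in
`[0, B]` exceeds its expectation by at most `B·√(log(2/δ)/(2n))`. -/
theorem empRademacher_concentration {Z : Type*} [MeasurableSpace Z]
    (μ : Measure Z) [IsProbabilityMeasure μ]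
    (n : ℕ) (hn : 1 ≤ n)
    (H : Set (Z → ℝ)) (hH : H.Nonempty) (hHc : H.Countable)
    (hmeas : ∀ h ∈ H, Measurable h)
    (B : ℝ) (hB : 0 < B)
    (hbd : ∀ h ∈ H, ∀ z : Z, h z ∈ Set.Icc (0 : ℝ) B)
    (δ : ℝ) (hδ0 : 0 < δ) (hδ1 : δ < 1) :
    ENNReal.ofReal (1 - δ) ≤
      (Measure.pi fun _ : Fin n => μ)
        {z | empRademacher H n z ≤
          (∫ w, empRademacher H n w ∂(Measure.pi fun _ : Fin n => μ))
            + B * Real.sqrt (Real.log (2 / δ) / (2 * n))} := by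
  set ε := B * Real.sqrt (Real.log (2 / δ) / (2 * n))
  have hlog : 0 < Real.log (2 / δ) := Real.log_pos (by rw [lt_div_iff₀ hδ0]; linarith)
  have htail := (hasBoundedDifferences_empRademacher hH hB.le hbd).measureReal_ge_le
    (fun _ : Fin n => μ) (measurable_empRademacher hHc hmeas)
    (abs_empRademacher_le hH hB.le fun h hh z => (abs_of_nonneg (hbd h hh z).1).trans_le
      (hbd h hh z).2) (ε := ε) (by positivity)
  have hexponent : -2 * ε ^ 2 / (n * (B / n) ^ 2) = -Real.log (2 / δ) := by
    rw [mul_pow, Real.sq_sqrt (by positivity)]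
    field_simp
  rw [hexponent, Real.exp_neg, Real.exp_log (by positivity), inv_div] at htail
  exact ofReal_one_sub_le_measure_le (htail.trans (by linarith))
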